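/- arXiv:2510.04478 — 2 statements merged into one kernel-verified Lean document; each statement's English description precedes it below -/
import Mathlib

section
/- Suppose the pair (A,B) has Gramian satisfying α₀ I ⪯ W_{A,B}(t₀,t₁) ⪯ α₁ I on [t₀,t₁] ⊆ [t₀,t₀+σ], with ‖A‖_∞ ≤ λ_A, ‖B‖_∞ ≤ λ_B, and let F be continuous with ‖F‖_∞ ≤ λ_F. Then the Gramian of the shifted pair (A+BF, B) satisfies W_{A+BF,B}(t₀,t₁) ⪰ α₀' I where α₀' = (2/α₀ + (λ_F²/λ_A)(1 + α₁/α₀)²(exp(2λ_A σ) − 1))⁻¹. -/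
/-
Fix v. The minimum-energy control u of (A, B) steering v at t₀ to 0 at t₁ has energy
vᵀ W⁻¹ v ≤ |v|² / α₀, and since 0 ⪯ W(t₀, t) ⪯ W(t₀, t₁) ⪯ α₁ I its trajectory obeys
|x(t)| ≤ e^{λ_A (t - t₀)} (1 + α₁/α₀) |v|. The same trajectory is driven in the closed loop
(A + BF, B) by the control u - F x, whose energy is therefore at most D |v|², where D is the
inverse of the claimed constant. Conversely, by variation of constants and Cauchy–Schwarz, every
control steering v to 0 for (A + BF, B) has energy at least |v|⁴ / vᵀ W_{A+BF,B} v.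
-/

open Matrix Set
open scoped Matrix.Norms.L2Operator

/-- Controllability Gramian. -/
noncomputable def gram {n m : ℕ} (Φ : ℝ → ℝ → Matrix (Fin n) (Fin n) ℝ)
    (B : ℝ → Matrix (Fin n) (Fin m) ℝ) (t₀ t₁ : ℝ) : Matrix (Fin n) (Fin n) ℝ :=
  ∫ s in t₀..t₁, Φ t₀ s * B s * (B s)ᵀ * (Φ t₀ s)ᵀ

open MeasureTheory

theorem sq_le_mul_of_forall_quadratic_nonneg {a b c : ℝ}
    (h : ∀ t, 0 ≤ a * (t * t) + 2 * b * t + c) : b ^ 2 ≤ a * c := by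
  have := discrim_le_zero h
  rw [discrim] at this
  linarith

theorem inv_mul_le_of_sq_le_mul {D Q E V : ℝ} (hD : 0 < D) (hQ : 0 ≤ Q)
    (hVE : V ^ 2 ≤ Q * E) (hE : E ≤ D * V) : D⁻¹ * V ≤ Q := by
  rw [inv_mul_le_iff₀ hD]
  nlinarith [mul_le_mul_of_nonneg_left hE hQ, mul_nonneg hD.le hQ]

section EuclideanNorm

/-! Vectors are plain functions `ι → ℝ`, whose default norm is the sup norm; their Euclidean
norm is taken as `‖WithLp.toLp 2 v‖`. -/

variable {ι κ : Type*} [Fintype ι] [Fintype κ]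

theorem norm_toLp_sq (v : ι → ℝ) : ‖WithLp.toLp 2 v‖ ^ 2 = v ⬝ᵥ v := by
  rw [EuclideanSpace.real_norm_sq_eq]
  simp [dotProduct, sq]

theorem dotProduct_self_nonneg (v : ι → ℝ) : 0 ≤ v ⬝ᵥ v :=
  norm_toLp_sq v ▸ sq_nonneg _

theorem dotProduct_le_norm_toLp_mul (v w : ι → ℝ) :
    v ⬝ᵥ w ≤ ‖WithLp.toLp 2 v‖ * ‖WithLp.toLp 2 w‖ := by
  simpa [EuclideanSpace.inner_toLp_toLp, dotProduct_comm] using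
    real_inner_le_norm (WithLp.toLp 2 v) (WithLp.toLp 2 w)

theorem dotProduct_self_sub_le (v w : ι → ℝ) :
    (v - w) ⬝ᵥ (v - w) ≤ 2 * (v ⬝ᵥ v) + 2 * (w ⬝ᵥ w) := by
  have := dotProduct_self_nonneg (v + w)
  simp only [dotProduct_add, add_dotProduct, dotProduct_sub, sub_dotProduct,
    dotProduct_comm w v] at this ⊢
  linarith

theorem norm_toLp_mulVec_le [DecidableEq κ] (M : Matrix ι κ ℝ) (x : κ → ℝ) :
    ‖WithLp.toLp 2 (M *ᵥ x)‖ ≤ ‖M‖ * ‖WithLp.toLp 2 x‖ :=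
  M.l2_opNorm_mulVec (WithLp.toLp 2 x)

theorem Matrix.l2_opNorm_one_le [DecidableEq ι] : ‖(1 : Matrix ι ι ℝ)‖ ≤ 1 := by
  rw [cstar_norm_def, map_one]
  exact ContinuousLinearMap.norm_id_le

end EuclideanNorm

section Calculus

variable {ι κ : Type*} [Fintype ι] [Fintype κ]

noncomputable def mulVecCLM : Matrix ι κ ℝ →L[ℝ] (κ → ℝ) →L[ℝ] (ι → ℝ) :=
  LinearMap.toContinuousLinearMap
    (LinearMap.toContinuousLinearMap.toLinearMap ∘ₗ mulVecBilin ℝ ℝ)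

theorem HasDerivAt.matrix_mulVec [DecidableEq κ] {M : ℝ → Matrix ι κ ℝ} {x : ℝ → κ → ℝ}
    {M' : Matrix ι κ ℝ} {x' : κ → ℝ} {t : ℝ} (hM : HasDerivAt M M' t)
    (hx : HasDerivAt x x' t) :
    HasDerivAt (fun s => M s *ᵥ x s) (M t *ᵥ x' + M' *ᵥ x t) t :=
  mulVecCLM.hasDerivAt_of_bilinear (u := M) (v := x) (fun _ => hM) (fun _ => hx)

theorem dotProduct_intervalIntegral {w : ℝ → ι → ℝ} {a b : ℝ}
    (hw : IntervalIntegrable w volume a b) (x : ι → ℝ) :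
    x ⬝ᵥ (∫ s in a..b, w s) = ∫ s in a..b, x ⬝ᵥ w s :=
  ((LinearMap.toContinuousLinearMap (dotProductBilin ℝ ℝ x)).intervalIntegral_comp_comm hw).symm

theorem dotProduct_intervalIntegral_mulVec [DecidableEq κ] {K : ℝ → Matrix ι κ ℝ} {a b : ℝ}
    (hK : IntervalIntegrable K volume a b) (x : ι → ℝ) (y : κ → ℝ) :
    x ⬝ᵥ (∫ s in a..b, K s) *ᵥ y = ∫ s in a..b, x ⬝ᵥ K s *ᵥ y :=
  ((LinearMap.toContinuousLinearMap
    (dotProductBilin ℝ ℝ x ∘ₗ (mulVecBilin ℝ ℝ).flip y)).intervalIntegral_comp_comm hK).symm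

theorem transpose_intervalIntegral [DecidableEq ι] [DecidableEq κ] {K : ℝ → Matrix ι κ ℝ}
    {a b : ℝ} (hK : IntervalIntegrable K volume a b) :
    (∫ s in a..b, K s)ᵀ = ∫ s in a..b, (K s)ᵀ :=
  ((LinearMap.toContinuousLinearMap
    (transposeLinearEquiv ι κ ℝ ℝ).toLinearMap).intervalIntegral_comp_comm hK).symm

theorem sq_integral_dotProduct_le {f g : ℝ → ι → ℝ} (hf : Continuous f) (hg : Continuous g)
    {a b : ℝ} (hab : a ≤ b) :
    (∫ s in a..b, f s ⬝ᵥ g s) ^ 2 ≤ (∫ s in a..b, f s ⬝ᵥ f s) * ∫ s in a..b, g s ⬝ᵥ g s := by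
  have hi : ∀ {p q : ℝ → ι → ℝ}, Continuous p → Continuous q →
      IntervalIntegrable (fun s => p s ⬝ᵥ q s) volume a b :=
    fun hp hq => (hp.dotProduct hq).intervalIntegrable a b
  refine sq_le_mul_of_forall_quadratic_nonneg fun t => ?_
  have hexpand : ∀ s, (t • f s + g s) ⬝ᵥ (t • f s + g s)
      = t * t * (f s ⬝ᵥ f s) + 2 * t * (f s ⬝ᵥ g s) + g s ⬝ᵥ g s := fun s => by
    simp only [dotProduct_add, add_dotProduct, dotProduct_smul, smul_dotProduct, smul_eq_mul,
      dotProduct_comm (g s) (f s)]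
    ring
  have := intervalIntegral.integral_nonneg (μ := volume) hab fun s _ =>
    dotProduct_self_nonneg (t • f s + g s)
  simp only [hexpand] at this
  rw [intervalIntegral.integral_add (((hi hf hf).const_mul _).add ((hi hf hg).const_mul _))
    (hi hg hg), intervalIntegral.integral_add ((hi hf hf).const_mul _) ((hi hf hg).const_mul _),
    intervalIntegral.integral_const_mul, intervalIntegral.integral_const_mul] at this
  linarith

theorem integral_exp_mul_sub {c : ℝ} (hc : c ≠ 0) (a b : ℝ) :
    ∫ s in a..b, Real.exp (c * (s - a)) = (Real.exp (c * (b - a)) - 1) / c := by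
  rw [intervalIntegral.integral_comp_sub_right (fun s => Real.exp (c * s)),
    intervalIntegral.integral_comp_mul_left _ hc, integral_exp]
  simp [div_eq_inv_mul]

end Calculus

namespace Matrix

theorem posDef_of_posSemidef_sub_smul_one {ι : Type*} [DecidableEq ι] {M : Matrix ι ι ℝ} {α : ℝ}
    (h : (M - α • 1).PosSemidef) (hα : 0 < α) : M.PosDef := by
  simpa using PosDef.posSemidef_add h (PosDef.one.smul hα)

variable {ι : Type*} [Fintype ι]

theorem PosSemidef.sq_dotProduct_mulVec_le {M : Matrix ι ι ℝ} (hM : M.PosSemidef)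
    (x y : ι → ℝ) : (x ⬝ᵥ M *ᵥ y) ^ 2 ≤ (x ⬝ᵥ M *ᵥ x) * (y ⬝ᵥ M *ᵥ y) := by
  have hsymm : y ⬝ᵥ M *ᵥ x = x ⬝ᵥ M *ᵥ y := by
    rw [dotProduct_mulVec, ← mulVec_transpose, dotProduct_comm,
      ← conjTranspose_eq_transpose_of_trivial, hM.isHermitian.eq]
  refine sq_le_mul_of_forall_quadratic_nonneg fun t => ?_
  have := hM.dotProduct_mulVec_nonneg (t • x + y)
  simp only [star_trivial, mulVec_add, mulVec_smul, dotProduct_add, add_dotProduct,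
    dotProduct_smul, smul_dotProduct, smul_eq_mul, hsymm] at this
  linarith

variable [DecidableEq ι]

theorem mul_dotProduct_self_le_of_posSemidef {M : Matrix ι ι ℝ} {α : ℝ}
    (h : (M - α • 1).PosSemidef) (x : ι → ℝ) : α * (x ⬝ᵥ x) ≤ x ⬝ᵥ M *ᵥ x := by
  have := h.dotProduct_mulVec_nonneg x
  simp only [star_trivial, sub_mulVec, smul_mulVec, one_mulVec, dotProduct_sub,
    dotProduct_smul, smul_eq_mul] at this
  linarith

theorem dotProduct_mulVec_le_of_posSemidef {M : Matrix ι ι ℝ} {β : ℝ}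
    (h : (β • 1 - M).PosSemidef) (x : ι → ℝ) : x ⬝ᵥ M *ᵥ x ≤ β * (x ⬝ᵥ x) := by
  have := h.dotProduct_mulVec_nonneg x
  simp only [star_trivial, sub_mulVec, smul_mulVec, one_mulVec, dotProduct_sub,
    dotProduct_smul, smul_eq_mul] at this
  linarith

theorem posSemidef_sub_smul_one_of_le {M : Matrix ι ι ℝ} (hM : M.IsHermitian) {α : ℝ}
    (h : ∀ x, α * (x ⬝ᵥ x) ≤ x ⬝ᵥ M *ᵥ x) : (M - α • 1).PosSemidef := by
  refine .of_dotProduct_mulVec_nonneg (hM.sub (by simp [IsHermitian])) fun x => ?_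
  simpa [sub_mulVec, smul_mulVec, dotProduct_sub] using h x

theorem mul_norm_toLp_le_of_posSemidef {M : Matrix ι ι ℝ} {α : ℝ}
    (h : (M - α • 1).PosSemidef) (x : ι → ℝ) :
    α * ‖WithLp.toLp 2 x‖ ≤ ‖WithLp.toLp 2 (M *ᵥ x)‖ := by
  have hαx := mul_dotProduct_self_le_of_posSemidef h x
  have hcs := dotProduct_le_norm_toLp_mul x (M *ᵥ x)
  rw [← norm_toLp_sq] at hαx
  rcases (norm_nonneg (WithLp.toLp 2 x)).eq_or_lt with h0 | hpos
  · simp [← h0]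
  · exact le_of_mul_le_mul_left (by nlinarith) hpos

theorem PosSemidef.norm_toLp_mulVec_le {M : Matrix ι ι ℝ} (hM : M.PosSemidef) {β : ℝ}
    (h : (β • 1 - M).PosSemidef) (x : ι → ℝ) :
    ‖WithLp.toLp 2 (M *ᵥ x)‖ ≤ β * ‖WithLp.toLp 2 x‖ := by
  set y := M *ᵥ x
  have hx := hM.dotProduct_mulVec_nonneg x
  have hy := hM.dotProduct_mulVec_nonneg y
  have hxβ := dotProduct_mulVec_le_of_posSemidef h x
  have hyβ := dotProduct_mulVec_le_of_posSemidef h y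
  have hcs := hM.sq_dotProduct_mulVec_le y x
  simp only [star_trivial] at hx hy
  rw [← norm_toLp_sq] at hxβ hyβ
  rw [← norm_toLp_sq y] at hcs
  have hβx : 0 ≤ β * ‖WithLp.toLp 2 x‖ := by
    rcases (norm_nonneg (WithLp.toLp 2 x)).eq_or_lt with h0 | hpos
    · simp [← h0]
    · exact mul_nonneg (nonneg_of_mul_nonneg_left (by nlinarith) (pow_pos hpos 2)) hpos.le
  -- `|y|⁴ = (yᵀ M x)² ≤ (yᵀ M y)(xᵀ M x) ≤ β² |x|² |y|²`
  have key : (‖WithLp.toLp 2 y‖ ^ 2) ^ 2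
      ≤ (β * ‖WithLp.toLp 2 x‖) ^ 2 * ‖WithLp.toLp 2 y‖ ^ 2 :=
    hcs.trans <| (mul_le_mul hyβ hxβ hx (hy.trans hyβ)).trans_eq (by ring)
  by_contra! hlt
  have : (β * ‖WithLp.toLp 2 x‖) ^ 2 < ‖WithLp.toLp 2 y‖ ^ 2 := by gcongr
  nlinarith [norm_nonneg (WithLp.toLp 2 y)]

end Matrix

section IntegralMulTranspose

variable {ι κ : Type*} [Fintype ι] [Fintype κ] [DecidableEq ι] {N : ℝ → Matrix ι κ ℝ}

theorem dotProduct_integral_mul_transpose_mulVec (hN : Continuous N) (a b : ℝ) (x y : ι → ℝ) :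
    x ⬝ᵥ (∫ s in a..b, N s * (N s)ᵀ) *ᵥ y = ∫ s in a..b, ((N s)ᵀ *ᵥ x) ⬝ᵥ ((N s)ᵀ *ᵥ y) := by
  rw [dotProduct_intervalIntegral_mulVec
    ((hN.matrix_mul hN.matrix_transpose).intervalIntegrable a b)]
  simp only [← mulVec_mulVec, dotProduct_mulVec, mulVec_transpose]

theorem isHermitian_integral_mul_transpose (hN : Continuous N) (a b : ℝ) :
    (∫ s in a..b, N s * (N s)ᵀ).IsHermitian := by
  rw [IsHermitian, conjTranspose_eq_transpose_of_trivial, transpose_intervalIntegral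
    ((hN.matrix_mul hN.matrix_transpose).intervalIntegrable a b)]
  simp only [transpose_mul, transpose_transpose]

theorem posSemidef_integral_mul_transpose (hN : Continuous N) {a b : ℝ} (hab : a ≤ b) :
    (∫ s in a..b, N s * (N s)ᵀ).PosSemidef := by
  refine .of_dotProduct_mulVec_nonneg (isHermitian_integral_mul_transpose hN a b) fun x => ?_
  rw [star_trivial, dotProduct_integral_mul_transpose_mulVec hN]
  exact intervalIntegral.integral_nonneg hab fun s _ => dotProduct_self_nonneg _

end IntegralMulTranspose

section EvolutionOperator

variable {R : Type*} [NormedRing R] [NormedAlgebra ℝ R] {M : ℝ → R}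

theorem eq_of_hasDerivAt_mul_left (hM : Continuous M) {f g : ℝ → R}
    (hf : ∀ t, HasDerivAt f (M t * f t) t) (hg : ∀ t, HasDerivAt g (M t * g t) t)
    {r : ℝ} (hr : f r = g r) : f = g := by
  funext t
  obtain ⟨a, b, hra, htb⟩ : ∃ a b, r ∈ Ioo a b ∧ t ∈ Ioo a b :=
    ⟨min r t - 1, max r t + 1, by grind⟩
  obtain ⟨C, hC⟩ :=
    (isCompact_Icc (a := a) (b := b)).exists_bound_of_continuousOn hM.continuousOn
  refine ODE_solution_unique_of_mem_Ioo (v := fun t X => M t * X) (s := fun _ => univ)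
    (K := C.toNNReal) (fun s hs => ?_) hra (fun s _ => ⟨hf s, trivial⟩)
    (fun s _ => ⟨hg s, trivial⟩) hr htb
  exact ((lipschitzWith_smul (M s)).weaken
    (NNReal.le_toNNReal_of_coe_le (hC s (Ioo_subset_Icc_self hs)))).lipschitzOnWith

structure IsEvolutionOperator (M : ℝ → R) (Φ : ℝ → ℝ → R) : Prop where
  hasDerivAt : ∀ s t, HasDerivAt (fun r => Φ r s) (M t * Φ t s) t
  self : ∀ s, Φ s s = 1

namespace IsEvolutionOperator

variable {Φ : ℝ → ℝ → R}

theorem mul (hΦ : IsEvolutionOperator M Φ) (hM : Continuous M) (t r s : ℝ) :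
    Φ t r * Φ r s = Φ t s := by
  refine congrFun (eq_of_hasDerivAt_mul_left (f := fun t => Φ t r * Φ r s) hM
    (fun t => ?_) (hΦ.hasDerivAt s) (r := r) ?_) t
  · simpa only [mul_assoc] using (hΦ.hasDerivAt r t).mul_const (Φ r s)
  · simp only [hΦ.self, one_mul]

theorem mul_swap (hΦ : IsEvolutionOperator M Φ) (hM : Continuous M) (t s : ℝ) :
    Φ t s * Φ s t = 1 := by
  rw [hΦ.mul hM, hΦ.self]

theorem hasDerivAt_right (hΦ : IsEvolutionOperator M Φ) [CompleteSpace R] (hM : Continuous M)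
    (a t : ℝ) : HasDerivAt (fun s => Φ a s) (-(Φ a t * M t)) t := by
  let U : ℝ → Rˣ := fun s => ⟨Φ s a, Φ a s, hΦ.mul_swap hM s a, hΦ.mul_swap hM a s⟩
  have hinv : (fun s => Φ a s) = fun s => Ring.inverse (Φ s a) :=
    funext fun s => (Ring.inverse_unit (U s)).symm
  rw [hinv]
  refine ((hasFDerivAt_ringInverse (𝕜 := ℝ) (U t)).comp_hasDerivAt t
    (hΦ.hasDerivAt a t)).congr_deriv ?_
  show -(Φ a t * (M t * Φ t a) * Φ a t) = -(Φ a t * M t)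
  rw [mul_assoc, mul_assoc, hΦ.mul_swap hM t a, mul_one]

theorem continuous_right (hΦ : IsEvolutionOperator M Φ) [CompleteSpace R] (hM : Continuous M)
    (a : ℝ) : Continuous (fun s => Φ a s) :=
  continuous_iff_continuousAt.2 fun t => (hΦ.hasDerivAt_right hM a t).continuousAt

theorem norm_le_exp (hΦ : IsEvolutionOperator M Φ) {a b K : ℝ}
    (hMK : ∀ t ∈ Icc a b, ‖M t‖ ≤ K) :
    ∀ t ∈ Icc a b, ‖Φ t a‖ ≤ ‖(1 : R)‖ * Real.exp (K * (t - a)) := by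
  have := norm_le_gronwallBound_of_norm_deriv_right_le (f := fun t => Φ t a) (ε := 0)
    (fun t _ => (hΦ.hasDerivAt a t).continuousAt.continuousWithinAt)
    (fun t _ => (hΦ.hasDerivAt a t).hasDerivWithinAt) (congrArg norm (hΦ.self a)).le
    (fun t ht => (norm_mul_le _ _).trans <| by
      rw [add_zero]; gcongr; exact hMK t (Ico_subset_Icc_self ht))
  simpa only [gronwallBound_ε0] using this

theorem integral_mulVec_eq {ι : Type*} [Fintype ι] [DecidableEq ι] {M : ℝ → Matrix ι ι ℝ}
    {Φ : ℝ → ℝ → Matrix ι ι ℝ} (hΦ : IsEvolutionOperator M Φ) (hM : Continuous M)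
    {x w : ℝ → ι → ℝ} (hw : Continuous w) (hx : ∀ t, HasDerivAt x (M t *ᵥ x t + w t) t)
    (a b : ℝ) : ∫ s in a..b, Φ a s *ᵥ w s = Φ a b *ᵥ x b - x a := by
  have hd : ∀ s, HasDerivAt (fun s => Φ a s *ᵥ x s) (Φ a s *ᵥ w s) s := fun s => by
    convert (hΦ.hasDerivAt_right hM a s).matrix_mulVec (hx s) using 1
    rw [mulVec_add, neg_mulVec, ← mulVec_mulVec]
    abel
  rw [intervalIntegral.integral_eq_sub_of_hasDerivAt (fun s _ => hd s)
    (((hΦ.continuous_right hM a).matrix_mulVec hw).intervalIntegrable a b), hΦ.self, one_mulVec]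

end IsEvolutionOperator

end EvolutionOperator

section Gramian

variable {n m : ℕ} {M : ℝ → Matrix (Fin n) (Fin n) ℝ} {Φ : ℝ → ℝ → Matrix (Fin n) (Fin n) ℝ}
  {B : ℝ → Matrix (Fin n) (Fin m) ℝ} {t₀ t₁ : ℝ}

theorem gram_eq_integral (t : ℝ) :
    gram Φ B t₀ t = ∫ s in t₀..t, (Φ t₀ s * B s) * (Φ t₀ s * B s)ᵀ := by
  simp only [_root_.gram, transpose_mul, Matrix.mul_assoc]

theorem hasDerivAt_gram (hN : Continuous fun s => Φ t₀ s * B s) (t : ℝ) :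
    HasDerivAt (fun t => gram Φ B t₀ t) ((Φ t₀ t * B t) * (Φ t₀ t * B t)ᵀ) t := by
  have hc := hN.matrix_mul hN.matrix_transpose
  simp only [gram_eq_integral]
  exact intervalIntegral.integral_hasDerivAt_right (hc.intervalIntegrable _ _)
    (hc.stronglyMeasurableAtFilter _ _) hc.continuousAt

theorem posSemidef_gram (hN : Continuous fun s => Φ t₀ s * B s) {t : ℝ} (ht : t₀ ≤ t) :
    (gram Φ B t₀ t).PosSemidef := by
  rw [gram_eq_integral]
  exact posSemidef_integral_mul_transpose hN ht

theorem HasDerivAt.feedback {x : ℝ → Fin n → ℝ} {u : ℝ → Fin m → ℝ} {t : ℝ}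
    (hx : HasDerivAt x (M t *ᵥ x t + B t *ᵥ u t) t) (F : Matrix (Fin m) (Fin n) ℝ) :
    HasDerivAt x ((M t + B t * F) *ᵥ x t + B t *ᵥ (u t - F *ᵥ x t)) t :=
  hx.congr_deriv <| by rw [add_mulVec, mulVec_sub, ← mulVec_mulVec]; abel

theorem IsEvolutionOperator.sq_dotProduct_self_le_gram_mul_integral
    (hΦ : IsEvolutionOperator M Φ) (hM : Continuous M) (hB : Continuous B)
    {x : ℝ → Fin n → ℝ} {u : ℝ → Fin m → ℝ} (hu : Continuous u)
    (hx : ∀ t, HasDerivAt x (M t *ᵥ x t + B t *ᵥ u t) t) (ht : t₀ ≤ t₁) (hx₁ : x t₁ = 0) :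
    (x t₀ ⬝ᵥ x t₀) ^ 2 ≤ (x t₀ ⬝ᵥ gram Φ B t₀ t₁ *ᵥ x t₀) * ∫ s in t₀..t₁, u s ⬝ᵥ u s := by
  have hN : Continuous fun s => Φ t₀ s * B s := (hΦ.continuous_right hM t₀).matrix_mul hB
  have hsteer := hΦ.integral_mulVec_eq hM (hB.matrix_mulVec hu) hx t₀ t₁
  rw [hx₁, mulVec_zero, zero_sub] at hsteer
  have hv : x t₀ ⬝ᵥ x t₀ = -∫ s in t₀..t₁, ((Φ t₀ s * B s)ᵀ *ᵥ x t₀) ⬝ᵥ u s := by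
    rw [← neg_neg (x t₀ ⬝ᵥ x t₀), ← dotProduct_neg, ← hsteer, dotProduct_intervalIntegral
      (((hΦ.continuous_right hM t₀).matrix_mulVec (hB.matrix_mulVec hu)).intervalIntegrable _ _)]
    simp only [mulVec_mulVec, dotProduct_mulVec, mulVec_transpose]
  rw [hv, neg_sq, gram_eq_integral, dotProduct_integral_mul_transpose_mulVec hN]
  exact sq_integral_dotProduct_le (hN.matrix_transpose.matrix_mulVec continuous_const) hu ht

end Gramian

section Steering

variable {n m : ℕ} {M : ℝ → Matrix (Fin n) (Fin n) ℝ} {Φ : ℝ → ℝ → Matrix (Fin n) (Fin n) ℝ}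
  {B : ℝ → Matrix (Fin n) (Fin m) ℝ} {t₀ t₁ : ℝ} {v : Fin n → ℝ}

/-! The paper's minimum-energy control `u(·; v)` steering `v` at `t₀` to `0` at `t₁`, and its
trajectory `x(·; v)`. -/

variable (Φ B t₀ t₁ v) in
noncomputable def steeringControl (s : ℝ) : Fin m → ℝ :=
  -((Φ t₀ s * B s)ᵀ *ᵥ (gram Φ B t₀ t₁)⁻¹ *ᵥ v)

variable (Φ B t₀ t₁ v) in
noncomputable def steeringState (t : ℝ) : Fin n → ℝ :=
  Φ t t₀ *ᵥ (v - gram Φ B t₀ t *ᵥ (gram Φ B t₀ t₁)⁻¹ *ᵥ v)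

theorem continuous_steeringControl (hN : Continuous fun s => Φ t₀ s * B s) :
    Continuous (steeringControl Φ B t₀ t₁ v) :=
  (hN.matrix_transpose.matrix_mulVec continuous_const).neg

theorem IsEvolutionOperator.hasDerivAt_steeringState (hΦ : IsEvolutionOperator M Φ)
    (hM : Continuous M) (hB : Continuous B) (t : ℝ) :
    HasDerivAt (steeringState Φ B t₀ t₁ v)
      (M t *ᵥ steeringState Φ B t₀ t₁ v t + B t *ᵥ steeringControl Φ B t₀ t₁ v t) t := by
  set q := (gram Φ B t₀ t₁)⁻¹ *ᵥ v
  have hN : Continuous fun s => Φ t₀ s * B s := (hΦ.continuous_right hM t₀).matrix_mul hB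
  have hz : HasDerivAt (fun t => v - gram Φ B t₀ t *ᵥ q)
      (-(((Φ t₀ t * B t) * (Φ t₀ t * B t)ᵀ) *ᵥ q)) t := by
    simpa using ((hasDerivAt_gram hN t).matrix_mulVec (hasDerivAt_const t q)).const_sub v
  have hcancel : Φ t t₀ *ᵥ (((Φ t₀ t * B t) * (Φ t₀ t * B t)ᵀ) *ᵥ q)
      = B t *ᵥ ((Φ t₀ t * B t)ᵀ *ᵥ q) := by
    rw [mulVec_mulVec, ← Matrix.mul_assoc, ← Matrix.mul_assoc, hΦ.mul_swap hM,
      Matrix.one_mul, ← mulVec_mulVec]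
  refine ((hΦ.hasDerivAt t₀ t).matrix_mulVec hz).congr_deriv ?_
  show Φ t t₀ *ᵥ -((Φ t₀ t * B t * (Φ t₀ t * B t)ᵀ) *ᵥ q)
      + (M t * Φ t t₀) *ᵥ (v - gram Φ B t₀ t *ᵥ q)
    = M t *ᵥ (Φ t t₀ *ᵥ (v - gram Φ B t₀ t *ᵥ q)) + B t *ᵥ -((Φ t₀ t * B t)ᵀ *ᵥ q)
  rw [mulVec_neg, hcancel, mulVec_neg, ← mulVec_mulVec, add_comm]

theorem IsEvolutionOperator.steeringState_self (hΦ : IsEvolutionOperator M Φ) :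
    steeringState Φ B t₀ t₁ v t₀ = v := by
  simp [steeringState, _root_.gram, hΦ.self]

theorem steeringState_end (hW : IsUnit (gram Φ B t₀ t₁)) :
    steeringState Φ B t₀ t₁ v t₁ = 0 := by
  simp [steeringState, mulVec_mulVec, mul_nonsing_inv _ ((isUnit_iff_isUnit_det _).1 hW)]

theorem integral_steeringControl_le (hN : Continuous fun s => Φ t₀ s * B s) {α₀ : ℝ}
    (hα₀ : 0 < α₀) (hgl : (gram Φ B t₀ t₁ - α₀ • 1).PosSemidef) :
    ∫ s in t₀..t₁, steeringControl Φ B t₀ t₁ v s ⬝ᵥ steeringControl Φ B t₀ t₁ v s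
      ≤ (v ⬝ᵥ v) / α₀ := by
  have hW := (posDef_of_posSemidef_sub_smul_one hgl hα₀).isUnit
  set q := (gram Φ B t₀ t₁)⁻¹ *ᵥ v
  have hWq : gram Φ B t₀ t₁ *ᵥ q = v := by
    rw [mulVec_mulVec, mul_nonsing_inv _ ((isUnit_iff_isUnit_det _).1 hW), one_mulVec]
  have henergy :
      ∫ s in t₀..t₁, steeringControl Φ B t₀ t₁ v s ⬝ᵥ steeringControl Φ B t₀ t₁ v s
        = q ⬝ᵥ v := by
    rw [← congrArg (q ⬝ᵥ ·) hWq, gram_eq_integral,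
      dotProduct_integral_mul_transpose_mulVec hN]
    simp only [steeringControl, neg_dotProduct, dotProduct_neg, neg_neg]
    rfl
  have hq := mul_norm_toLp_le_of_posSemidef hgl q
  rw [hWq] at hq
  have hcs := dotProduct_le_norm_toLp_mul q v
  rw [henergy, ← norm_toLp_sq, le_div_iff₀ hα₀]
  nlinarith [norm_nonneg (WithLp.toLp 2 v)]

theorem IsEvolutionOperator.norm_steeringState_le (hΦ : IsEvolutionOperator M Φ)
    (hM : Continuous M) (hB : Continuous B) {K α₀ α₁ : ℝ} (hMK : ∀ t ∈ Icc t₀ t₁, ‖M t‖ ≤ K)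
    (hα₀ : 0 < α₀) (hgl : (gram Φ B t₀ t₁ - α₀ • 1).PosSemidef)
    (hgu : (α₁ • (1 : Matrix (Fin n) (Fin n) ℝ) - gram Φ B t₀ t₁).PosSemidef) :
    ∀ t ∈ Icc t₀ t₁, ‖WithLp.toLp 2 (steeringState Φ B t₀ t₁ v t)‖
      ≤ Real.exp (K * (t - t₀)) * ((1 + α₁ / α₀) * ‖WithLp.toLp 2 v‖) := by
  intro t ht
  rcases eq_or_ne v 0 with rfl | hv
  · simp [steeringState]
  have hN : Continuous fun s => Φ t₀ s * B s := (hΦ.continuous_right hM t₀).matrix_mul hB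
  have hα₁ : 0 ≤ α₁ := by
    have hlow := mul_dotProduct_self_le_of_posSemidef hgl v
    have hup := dotProduct_mulVec_le_of_posSemidef hgu v
    have hv' := dotProduct_self_star_pos_iff.2 hv
    rw [star_trivial] at hv'
    nlinarith
  have hW := (posDef_of_posSemidef_sub_smul_one hgl hα₀).isUnit
  set q := (gram Φ B t₀ t₁)⁻¹ *ᵥ v
  have hWq : gram Φ B t₀ t₁ *ᵥ q = v := by
    rw [mulVec_mulVec, mul_nonsing_inv _ ((isUnit_iff_isUnit_det _).1 hW), one_mulVec]
  have hG := posSemidef_gram hN ht.1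
  have hGα₁ : (α₁ • 1 - gram Φ B t₀ t).PosSemidef := by
    have hc := (hN.matrix_mul hN.matrix_transpose).intervalIntegrable (μ := volume)
    have hsplit : gram Φ B t₀ t₁ - gram Φ B t₀ t
        = ∫ s in t..t₁, (Φ t₀ s * B s) * (Φ t₀ s * B s)ᵀ := by
      rw [gram_eq_integral, gram_eq_integral]
      exact intervalIntegral.integral_interval_sub_left (hc _ _) (hc _ _)
    rw [← sub_add_sub_cancel _ (gram Φ B t₀ t₁), hsplit]
    exact hgu.add (posSemidef_integral_mul_transpose hN ht.2)
  have hq : α₀ * ‖WithLp.toLp 2 q‖ ≤ ‖WithLp.toLp 2 v‖ :=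
    hWq ▸ mul_norm_toLp_le_of_posSemidef hgl q
  have hz : ‖WithLp.toLp 2 (v - gram Φ B t₀ t *ᵥ q)‖ ≤ (1 + α₁ / α₀) * ‖WithLp.toLp 2 v‖ :=
    calc _ ≤ ‖WithLp.toLp 2 v‖ + ‖WithLp.toLp 2 (gram Φ B t₀ t *ᵥ q)‖ := by
          rw [WithLp.toLp_sub]; exact norm_sub_le _ _
      _ ≤ ‖WithLp.toLp 2 v‖ + α₁ * ‖WithLp.toLp 2 q‖ := by
          gcongr; exact hG.norm_toLp_mulVec_le hGα₁ q
      _ ≤ ‖WithLp.toLp 2 v‖ + α₁ * (‖WithLp.toLp 2 v‖ / α₀) := by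
          gcongr; rwa [le_div_iff₀ hα₀, mul_comm]
      _ = _ := by field_simp
  calc _ ≤ ‖Φ t t₀‖ * ‖WithLp.toLp 2 (v - gram Φ B t₀ t *ᵥ q)‖ := norm_toLp_mulVec_le _ _
    _ ≤ _ := mul_le_mul ((hΦ.norm_le_exp hMK t ht).trans
        (mul_le_of_le_one_left (Real.exp_pos _).le l2_opNorm_one_le)) hz (norm_nonneg _)
        (Real.exp_pos _).le

end Steering

theorem integral_sub_mulVec_le {ι κ : Type*} [Fintype ι] [Fintype κ] [DecidableEq κ]
    {u : ℝ → ι → ℝ} {F : ℝ → Matrix ι κ ℝ} {x : ℝ → κ → ℝ}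
    (hu : Continuous u) (hF : Continuous F) (hx : Continuous x)
    {a b σ K L U c : ℝ} (hab : a ≤ b) (hbσ : b ≤ a + σ) (hK : 0 < K)
    (hU : ∫ s in a..b, u s ⬝ᵥ u s ≤ U) (hFL : ∀ s ∈ Icc a b, ‖F s‖ ≤ L)
    (hxc : ∀ s ∈ Icc a b, ‖WithLp.toLp 2 (x s)‖ ≤ Real.exp (K * (s - a)) * c) :
    ∫ s in a..b, (u s - F s *ᵥ x s) ⬝ᵥ (u s - F s *ᵥ x s)
      ≤ 2 * U + L ^ 2 / K * c ^ 2 * (Real.exp (2 * K * σ) - 1) := by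
  have hpt : ∀ s ∈ Icc a b, (u s - F s *ᵥ x s) ⬝ᵥ (u s - F s *ᵥ x s)
      ≤ 2 * (u s ⬝ᵥ u s) + 2 * (L ^ 2 * c ^ 2) * Real.exp (2 * K * (s - a)) := by
    intro s hs
    have hFx : ‖WithLp.toLp 2 (F s *ᵥ x s)‖ ≤ L * (Real.exp (K * (s - a)) * c) :=
      (norm_toLp_mulVec_le _ _).trans <| mul_le_mul (hFL s hs) (hxc s hs) (norm_nonneg _)
        ((norm_nonneg _).trans (hFL s hs))
    have hsq := pow_le_pow_left₀ (norm_nonneg _) hFx 2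
    rw [norm_toLp_sq, mul_pow, mul_pow, ← Real.exp_nat_mul,
      show ((2 : ℕ) : ℝ) * (K * (s - a)) = 2 * K * (s - a) by push_cast; ring] at hsq
    nlinarith [dotProduct_self_sub_le (u s) (F s *ᵥ x s)]
  have hexp : ∫ s in a..b, Real.exp (2 * K * (s - a)) ≤ (Real.exp (2 * K * σ) - 1) / (2 * K) := by
    rw [integral_exp_mul_sub (by positivity) a b]
    gcongr
    linarith
  have hi₁ := (hu.dotProduct hu).intervalIntegrable (μ := volume) a b
  have hi₂ : IntervalIntegrable (fun s => Real.exp (2 * K * (s - a))) volume a b :=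
    (by fun_prop : Continuous fun s => Real.exp (2 * K * (s - a))).intervalIntegrable a b
  calc _ ≤ ∫ s in a..b, (2 * (u s ⬝ᵥ u s) + 2 * (L ^ 2 * c ^ 2) * Real.exp (2 * K * (s - a))) :=
        intervalIntegral.integral_mono_on hab
          ((hu.sub (hF.matrix_mulVec hx)).dotProduct (hu.sub (hF.matrix_mulVec hx))
            |>.intervalIntegrable a b) ((hi₁.const_mul 2).add (hi₂.const_mul _)) hpt
    _ = 2 * (∫ s in a..b, u s ⬝ᵥ u s)
          + 2 * (L ^ 2 * c ^ 2) * ∫ s in a..b, Real.exp (2 * K * (s - a)) := by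
        rw [intervalIntegral.integral_add (hi₁.const_mul 2) (hi₂.const_mul _),
          intervalIntegral.integral_const_mul, intervalIntegral.integral_const_mul]
    _ ≤ 2 * U + 2 * (L ^ 2 * c ^ 2) * ((Real.exp (2 * K * σ) - 1) / (2 * K)) := by
        gcongr
    _ = _ := by field_simp

theorem stmt_9_general {n m : ℕ} (t₀ t₁ σ lamA lamF α₀ α₁ : ℝ)
    (ht : t₀ ≤ t₁) (ht1 : t₁ ≤ t₀ + σ)
    (hlamA : 0 < lamA) (hα₀ : 0 < α₀)
    (A : ℝ → Matrix (Fin n) (Fin n) ℝ) (B : ℝ → Matrix (Fin n) (Fin m) ℝ)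
    (F : ℝ → Matrix (Fin m) (Fin n) ℝ)
    (hAc : Continuous A) (hBc : Continuous B) (hFc : Continuous F)
    (hAb : ∀ t ∈ Icc t₀ (t₀ + σ), ‖A t‖ ≤ lamA)
    (hFb : ∀ t ∈ Icc t₀ (t₀ + σ), ‖F t‖ ≤ lamF)
    (ΦA : ℝ → ℝ → Matrix (Fin n) (Fin n) ℝ)
    (hΦAderiv : ∀ s t : ℝ, HasDerivAt (fun r => ΦA r s) (A t * ΦA t s) t)
    (hΦAinit : ∀ s : ℝ, ΦA s s = 1)
    (ΦS : ℝ → ℝ → Matrix (Fin n) (Fin n) ℝ)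
    (hΦSderiv : ∀ s t : ℝ, HasDerivAt (fun r => ΦS r s) ((A t + B t * F t) * ΦS t s) t)
    (hΦSinit : ∀ s : ℝ, ΦS s s = 1)
    (hgl : (gram ΦA B t₀ t₁ - α₀ • 1).PosSemidef)
    (hgu : (α₁ • (1 : Matrix (Fin n) (Fin n) ℝ) - gram ΦA B t₀ t₁).PosSemidef) :
    (gram ΦS B t₀ t₁ -
        (2 / α₀ + lamF ^ 2 / lamA * (1 + α₁ / α₀) ^ 2 *
          (Real.exp (2 * lamA * σ) - 1))⁻¹ • 1).PosSemidef := by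
  have hΦA : IsEvolutionOperator A ΦA := ⟨hΦAderiv, hΦAinit⟩
  have hΦS : IsEvolutionOperator (fun t => A t + B t * F t) ΦS := ⟨hΦSderiv, hΦSinit⟩
  have hSc : Continuous fun t => A t + B t * F t := hAc.add (hBc.matrix_mul hFc)
  have hIcc : Icc t₀ t₁ ⊆ Icc t₀ (t₀ + σ) := Icc_subset_Icc_right ht1
  have hgS := posSemidef_gram ((hΦS.continuous_right hSc t₀).matrix_mul hBc) ht
  refine posSemidef_sub_smul_one_of_le hgS.isHermitian fun v => ?_
  set x := steeringState ΦA B t₀ t₁ v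
  set u := steeringControl ΦA B t₀ t₁ v
  have hx t : HasDerivAt x (A t *ᵥ x t + B t *ᵥ u t) t := hΦA.hasDerivAt_steeringState hAc hBc t
  have hxc : Continuous x := continuous_iff_continuousAt.2 fun t => (hx t).continuousAt
  have huc : Continuous u :=
    continuous_steeringControl ((hΦA.continuous_right hAc t₀).matrix_mul hBc)
  have hlower := hΦS.sq_dotProduct_self_le_gram_mul_integral (u := fun s => u s - F s *ᵥ x s)
    hSc hBc (huc.sub (hFc.matrix_mulVec hxc)) (fun t => (hx t).feedback (F t)) ht
    (steeringState_end (posDef_of_posSemidef_sub_smul_one hgl hα₀).isUnit)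
  have hupper := integral_sub_mulVec_le huc hFc hxc ht ht1 hlamA
    (integral_steeringControl_le ((hΦA.continuous_right hAc t₀).matrix_mul hBc) hα₀ hgl)
    (fun s hs => hFb s (hIcc hs))
    (hΦA.norm_steeringState_le hAc hBc (fun s hs => hAb s (hIcc hs)) hα₀ hgl hgu)
  rw [show x t₀ = v from hΦA.steeringState_self] at hlower
  rw [mul_pow, norm_toLp_sq] at hupper
  refine inv_mul_le_of_sq_le_mul ?_ (by simpa using hgS.dotProduct_mulVec_nonneg v) hlower
    (hupper.trans_eq (by ring))
  exact add_pos_of_pos_of_nonneg (by positivity) <| mul_nonneg (by positivity) <|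
    sub_nonneg.2 (Real.one_le_exp (by nlinarith))

/-- if α₀ I ⪯ W_{A,B}(t₀,t₁) ⪯ α₁ I on [t₀,t₁] ⊆ [t₀,t₀+σ], with
‖A‖ ≤ λ_A, ‖B‖ ≤ λ_B, ‖F‖ ≤ λ_F, then the Gramian of the shifted pair (A+BF, B)
satisfies W_{A+BF,B}(t₀,t₁) ⪰ (2/α₀ + (λ_F²/λ_A)(1+α₁/α₀)²(e^{2λ_Aσ} − 1))⁻¹ I. -/
theorem stmt_9 {n m : ℕ} (t₀ t₁ σ lamA lamB lamF α₀ α₁ : ℝ)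
    (hσ : 0 ≤ σ) (ht : t₀ ≤ t₁) (ht1 : t₁ ≤ t₀ + σ)
    (hlamA : 0 < lamA) (hα₀ : 0 < α₀)
    (A : ℝ → Matrix (Fin n) (Fin n) ℝ) (B : ℝ → Matrix (Fin n) (Fin m) ℝ)
    (F : ℝ → Matrix (Fin m) (Fin n) ℝ)
    (hAc : Continuous A) (hBc : Continuous B) (hFc : Continuous F)
    (hAb : ∀ t ∈ Icc t₀ (t₀ + σ), ‖A t‖ ≤ lamA)
    (hBb : ∀ t ∈ Icc t₀ (t₀ + σ), ‖B t‖ ≤ lamB)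
    (hFb : ∀ t ∈ Icc t₀ (t₀ + σ), ‖F t‖ ≤ lamF)
    (ΦA : ℝ → ℝ → Matrix (Fin n) (Fin n) ℝ)
    (hΦAderiv : ∀ s t : ℝ, HasDerivAt (fun r => ΦA r s) (A t * ΦA t s) t)
    (hΦAinit : ∀ s : ℝ, ΦA s s = 1)
    (ΦS : ℝ → ℝ → Matrix (Fin n) (Fin n) ℝ)
    (hΦSderiv : ∀ s t : ℝ, HasDerivAt (fun r => ΦS r s) ((A t + B t * F t) * ΦS t s) t)
    (hΦSinit : ∀ s : ℝ, ΦS s s = 1)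
    (hgl : (gram ΦA B t₀ t₁ - α₀ • 1).PosSemidef)
    (hgu : (α₁ • (1 : Matrix (Fin n) (Fin n) ℝ) - gram ΦA B t₀ t₁).PosSemidef) :
    (gram ΦS B t₀ t₁ -
        (2 / α₀ + lamF ^ 2 / lamA * (1 + α₁ / α₀) ^ 2 *
          (Real.exp (2 * lamA * σ) - 1))⁻¹ • 1).PosSemidef :=
  stmt_9_general t₀ t₁ σ lamA lamF α₀ α₁ ht ht1 hlamA hα₀ A B F hAc hBc hFc hAb hFb ΦA hΦAderiv
    hΦAinit ΦS hΦSderiv hΦSinit hgl hgu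
end

section
/- Let Z : [0,T] → ℝ^{n×n} satisfy ‖Φ_Z(t,s)‖ ≤ c_Z e^{−ρ(t−s)} for 0 ≤ s ≤ t ≤ T. Suppose δv(s) satisfies ‖δv(s)‖ ≤ L_T λ_G c_Z e^{−ρ(T−s)} for all s ∈ [0,T], and let δx solve δẋ(t) = Z(t)δx(t) − B(t)R(t)⁻¹B(t)ᵀδv(t) with δx(0) = l₀, where ‖B‖_∞ ≤ λ_B, R(t) ⪰ γ_R I. Then ‖δx(t)‖ ≤ Λ (‖l₀‖ e^{−ρt} + L_T e^{−ρ(T−t)}) for all t ∈ [0,T], where Λ = max{c_Z, c_Z² λ_B² λ_G/(2ρ γ_R)}. -/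
/-!
Uniqueness for the linear equation `Ẋ = Z X` gives `Φ(t,s) Φ(s,r) = Φ(t,r)`, so `Φ(t,0)` is
invertible and `u(t) = Φ(t,0)⁻¹ δx(t)` has derivative `Φ(0,t) f(t)`, where
`f = -B R⁻¹ Bᵀ δv` is the forcing term. Integrating gives the variation-of-constants formula
`δx(t) = Φ(t,0) l₀ + ∫₀ᵗ Φ(t,s) f(s) ds`. Since `R ⪰ γ_R I` forces `‖R⁻¹‖ ≤ γ_R⁻¹`, the forcing
term is at most `λ_B² γ_R⁻¹ ‖δv(s)‖`, and the remaining exponential integral is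
`∫₀ᵗ e^{-ρ(t-s)} e^{-ρ(T-s)} ds = (e^{-ρ(T-t)} - e^{-ρ(T+t)}) / (2ρ) ≤ e^{-ρ(T-t)} / (2ρ)`.
-/

open Matrix Set MeasureTheory Real
open scoped Matrix.Norms.L2Operator RealInnerProductSpace

section EvolutionOperator

variable {A : Type*} [NormedRing A] [NormedAlgebra ℝ A] {Z : ℝ → A} {a b : ℝ}

theorem eqOn_Icc_of_hasDerivAt_mul_left {X Y : ℝ → A} (hZ : ContinuousOn Z (Icc a b))
    (hX : ∀ t ∈ Icc a b, HasDerivAt X (Z t * X t) t)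
    (hY : ∀ t ∈ Icc a b, HasDerivAt Y (Z t * Y t) t)
    {s : ℝ} (hs : s ∈ Icc a b) (hXY : X s = Y s) : EqOn X Y (Icc a b) := by
  obtain ⟨C, hC⟩ := isCompact_Icc.exists_bound_of_continuousOn hZ
  have hlip : ∀ t ∈ Icc a b, LipschitzOnWith C.toNNReal (Z t * ·) univ := fun t ht =>
    (AddMonoidHomClass.lipschitz_of_bound (AddMonoidHom.mulLeft (Z t)) C fun X =>
      (norm_mul_le _ _).trans (mul_le_mul_of_nonneg_right (hC t ht) (norm_nonneg X))).lipschitzOnWith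
  have hXc : ContinuousOn X (Icc a b) := fun t ht => (hX t ht).continuousAt.continuousWithinAt
  have hYc : ContinuousOn Y (Icc a b) := fun t ht => (hY t ht).continuousAt.continuousWithinAt
  rw [← Icc_union_Icc_eq_Icc hs.1 hs.2]
  refine EqOn.union ?_ ?_
  · have hsub : Icc a s ⊆ Icc a b := Icc_subset_Icc_right hs.2
    exact ODE_solution_unique_of_mem_Icc_left (fun t ht => hlip t (hsub (Ioc_subset_Icc_self ht)))
      (hXc.mono hsub) (fun t ht => (hX t (hsub (Ioc_subset_Icc_self ht))).hasDerivWithinAt)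
      (fun _ _ => mem_univ _) (hYc.mono hsub)
      (fun t ht => (hY t (hsub (Ioc_subset_Icc_self ht))).hasDerivWithinAt)
      (fun _ _ => mem_univ _) hXY
  · have hsub : Icc s b ⊆ Icc a b := Icc_subset_Icc_left hs.1
    exact ODE_solution_unique_of_mem_Icc_right (fun t ht => hlip t (hsub (Ico_subset_Icc_self ht)))
      (hXc.mono hsub) (fun t ht => (hX t (hsub (Ico_subset_Icc_self ht))).hasDerivWithinAt)
      (fun _ _ => mem_univ _) (hYc.mono hsub)
      (fun t ht => (hY t (hsub (Ico_subset_Icc_self ht))).hasDerivWithinAt)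
      (fun _ _ => mem_univ _) hXY

variable (Z) in
structure IsEvolutionOperator_s16 (Φ : ℝ → ℝ → A) (a b : ℝ) : Prop where
  hasDerivAt : ∀ s ∈ Icc a b, ∀ t ∈ Icc a b, HasDerivAt (Φ · s) (Z t * Φ t s) t
  apply_self : ∀ s ∈ Icc a b, Φ s s = 1

namespace IsEvolutionOperator_s16

variable {Φ : ℝ → ℝ → A} (hΦ : IsEvolutionOperator_s16 Z Φ a b) (hZ : ContinuousOn Z (Icc a b))
include hΦ hZ

theorem mul_eq {r s t : ℝ} (hr : r ∈ Icc a b) (hs : s ∈ Icc a b) (ht : t ∈ Icc a b) :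
    Φ t s * Φ s r = Φ t r := by
  refine eqOn_Icc_of_hasDerivAt_mul_left (X := fun t => Φ t s * Φ s r) hZ (fun t ht => ?_)
    (hΦ.hasDerivAt r hr) hs (by rw [hΦ.apply_self s hs, one_mul]) ht
  simpa only [mul_assoc] using (hΦ.hasDerivAt s hs t ht).mul_const (Φ s r)

theorem mul_eq_one {s t : ℝ} (hs : s ∈ Icc a b) (ht : t ∈ Icc a b) : Φ t s * Φ s t = 1 := by
  rw [hΦ.mul_eq hZ ht hs ht, hΦ.apply_self t ht]

theorem inverse_eq {s t : ℝ} (hs : s ∈ Icc a b) (ht : t ∈ Icc a b) :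
    Ring.inverse (Φ t s) = Φ s t :=
  Ring.inverse_unit ⟨Φ t s, Φ s t, hΦ.mul_eq_one hZ hs ht, hΦ.mul_eq_one hZ ht hs⟩

theorem hasDerivAt_inverse [CompleteSpace A] {s t : ℝ} (hs : s ∈ Icc a b) (ht : t ∈ Icc a b) :
    HasDerivAt (fun r => Ring.inverse (Φ r s)) (-(Φ s t * Z t)) t := by
  have := (hasFDerivAt_ringInverse
    ⟨Φ t s, Φ s t, hΦ.mul_eq_one hZ hs ht, hΦ.mul_eq_one hZ ht hs⟩).comp_hasDerivAt t
    (hΦ.hasDerivAt s hs t ht)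
  refine this.congr_deriv ?_
  show -(Φ s t * (Z t * Φ t s) * Φ s t) = _
  rw [mul_assoc, mul_assoc, hΦ.mul_eq_one hZ hs ht, mul_one]

end IsEvolutionOperator_s16

theorem IsEvolutionOperator_s16.map {B : Type*} [NormedRing B] [NormedAlgebra ℝ B]
    {Φ : ℝ → ℝ → A} (hΦ : IsEvolutionOperator_s16 Z Φ a b) (φ : A →A[ℝ] B) :
    IsEvolutionOperator_s16 (fun t => φ (Z t)) (fun t s => φ (Φ t s)) a b where
  hasDerivAt s hs t ht :=
    (φ.toContinuousLinearMap.hasFDerivAt.comp_hasDerivAt t (hΦ.hasDerivAt s hs t ht)).congr_deriv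
      (map_mul φ _ _)
  apply_self s hs := by rw [hΦ.apply_self s hs, map_one]

end EvolutionOperator

noncomputable def Matrix.toEuclideanContinuousAlgHom (ι : Type*) [Fintype ι] [DecidableEq ι] :
    Matrix ι ι ℝ →A[ℝ] (EuclideanSpace ℝ ι →L[ℝ] EuclideanSpace ℝ ι) where
  toAlgHom := (toEuclideanCLM : Matrix ι ι ℝ ≃⋆ₐ[ℝ] _).toAlgEquiv.toAlgHom
  cont := (AddMonoidHomClass.isometry_of_norm (toEuclideanCLM : Matrix ι ι ℝ ≃⋆ₐ[ℝ] _)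
    fun _ => rfl).continuous

instance ContinuousLinearMap.isBoundedSMul_apply {𝕜 E : Type*} [NontriviallyNormedField 𝕜]
    [NormedAddCommGroup E] [NormedSpace 𝕜 E] : IsBoundedSMul (E →L[𝕜] E) E :=
  .of_norm_smul_le fun f x => f.le_opNorm x

section Duhamel
variable {E : Type*} [NormedAddCommGroup E] [NormedSpace ℝ E] [CompleteSpace E]
  {Z : ℝ → E →L[ℝ] E} {Φ : ℝ → ℝ → E →L[ℝ] E} {a b : ℝ}

theorem IsEvolutionOperator_s16.eq_add_integral (hΦ : IsEvolutionOperator_s16 Z Φ a b)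
    (hZ : ContinuousOn Z (Icc a b)) {x f : ℝ → E}
    (hx : ∀ t ∈ Icc a b, HasDerivAt x (Z t (x t) + f t) t) (hf : IntegrableOn f (Icc a b))
    {t : ℝ} (ht : t ∈ Icc a b) :
    x t = Φ t a (x a) + ∫ s in a..t, Φ t s (f s) := by
  have ha : a ∈ Icc a b := ⟨le_rfl, ht.1.trans ht.2⟩
  have hsub : Icc a t ⊆ Icc a b := Icc_subset_Icc_right ht.2
  -- `Ring.inverse (Φ r a)` agrees with `Φ a r` on `[a, b]`, and unlike `Φ a ·` it is known to be
  -- differentiable there.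
  set Q : ℝ → E →L[ℝ] E := fun r => Ring.inverse (Φ r a)
  have hQ' : ∀ s ∈ Icc a b, HasDerivAt Q (-(Φ a s * Z s)) s :=
    fun s hs => hΦ.hasDerivAt_inverse hZ ha hs
  have hQ : ∀ s ∈ Icc a b, Q s = Φ a s := fun s hs => hΦ.inverse_eq hZ ha hs
  have hu : ∀ s ∈ uIcc a t, HasDerivAt (fun r => Q r (x r)) (Q s (f s)) s := by
    intro s hs
    rw [uIcc_of_le ht.1] at hs
    refine ((hQ' s (hsub hs)).clm_apply (hx s (hsub hs))).congr_deriv ?_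
    rw [hQ s (hsub hs)]
    simp
  have hint : IntervalIntegrable (fun s => Q s (f s)) volume a t := by
    rw [intervalIntegrable_iff_integrableOn_Icc_of_le ht.1]
    exact (hf.mono_set hsub).continuousOn_smul
      (fun s hs => (hQ' s (hsub hs)).continuousAt.continuousWithinAt) isCompact_Icc
  have hFTC := intervalIntegral.integral_eq_sub_of_hasDerivAt hu hint
  calc x t = (Φ t a * Q t) (x t) := by rw [hQ t ht, hΦ.mul_eq_one hZ ha ht]; rfl
    _ = Φ t a (x a + ∫ s in a..t, Q s (f s)) := by
      rw [hFTC, hQ a ha, hΦ.apply_self a ha]; simp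
    _ = Φ t a (x a) + ∫ s in a..t, (Φ t a * Q s) (f s) := by
      rw [map_add, ← (Φ t a).intervalIntegral_comp_comm hint]; rfl
    _ = Φ t a (x a) + ∫ s in a..t, Φ t s (f s) := by
      congr 1
      refine intervalIntegral.integral_congr fun s hs => ?_
      rw [uIcc_of_le ht.1] at hs
      rw [hQ s (hsub hs), hΦ.mul_eq hZ (hsub hs) ha ht]

theorem integrableOn_deriv_sub_apply (hZ : ContinuousOn Z (Icc a b)) {x : ℝ → E}
    (hx : ∀ t ∈ Icc a b, DifferentiableAt ℝ x t) {M : ℝ → ℝ} (hM : IntegrableOn M (Icc a b))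
    (hle : ∀ t ∈ Icc a b, ‖deriv x t - Z t (x t)‖ ≤ M t) :
    IntegrableOn (fun t => deriv x t - Z t (x t)) (Icc a b) :=
  hM.mono' ((stronglyMeasurable_deriv x).aestronglyMeasurable.sub
      ((hZ.clm_apply fun t ht => (hx t ht).continuousAt.continuousWithinAt).aestronglyMeasurable
        measurableSet_Icc))
    ((ae_restrict_iff' measurableSet_Icc).2 (ae_of_all _ hle))

end Duhamel

section MatrixBounds

variable {m : Type*} [Fintype m] [DecidableEq m]

theorem Matrix.PosSemidef.mul_norm_le_norm_toEuclideanCLM {R : Matrix m m ℝ} {γ : ℝ}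
    (h : (R - γ • 1).PosSemidef) (x : EuclideanSpace ℝ m) :
    γ * ‖x‖ ≤ ‖toEuclideanCLM (𝕜 := ℝ) R x‖ := by
  have hquad : γ * ‖x‖ ^ 2 ≤ ‖x‖ * ‖toEuclideanCLM (𝕜 := ℝ) R x‖ := by
    have hpsd := h.dotProduct_mulVec_nonneg (WithLp.ofLp x)
    simp only [star_trivial, sub_mulVec, smul_mulVec, one_mulVec, dotProduct_sub, dotProduct_smul,
      smul_eq_mul, sub_nonneg] at hpsd
    calc γ * ‖x‖ ^ 2 = γ * (x ⬝ᵥ x) := by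
          rw [← real_inner_self_eq_norm_sq, EuclideanSpace.inner_eq_star_dotProduct, star_trivial]
      _ ≤ x ⬝ᵥ R *ᵥ x := hpsd
      _ = ⟪x, toEuclideanCLM (𝕜 := ℝ) R x⟫ := (inner_toEuclideanCLM R x x).symm
      _ ≤ ‖x‖ * ‖toEuclideanCLM (𝕜 := ℝ) R x‖ := real_inner_le_norm _ _
  rcases (norm_nonneg x).eq_or_lt with hx | hx
  · rw [← hx, mul_zero]; exact norm_nonneg _
  · exact le_of_mul_le_mul_right (by nlinarith) hx

theorem Matrix.norm_inv_le_of_posSemidef_sub_smul {R : Matrix m m ℝ} {γ : ℝ} (hγ : 0 < γ)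
    (h : (R - γ • 1).PosSemidef) : ‖R⁻¹‖ ≤ γ⁻¹ := by
  have hR : R.PosDef := by simpa using (PosDef.one.smul hγ).add_posSemidef h
  have hRR : R * R⁻¹ = 1 := mul_nonsing_inv R ((isUnit_iff_isUnit_det R).1 hR.isUnit)
  refine (toEuclideanCLM (𝕜 := ℝ) R⁻¹).opNorm_le_bound (inv_nonneg.2 hγ.le) fun y => ?_
  rw [le_inv_mul_iff₀ hγ]
  calc γ * ‖toEuclideanCLM (𝕜 := ℝ) R⁻¹ y‖
      ≤ ‖toEuclideanCLM (𝕜 := ℝ) R (toEuclideanCLM (𝕜 := ℝ) R⁻¹ y)‖ :=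
        h.mul_norm_le_norm_toEuclideanCLM _
    _ = ‖y‖ := by rw [← mul_apply_eq_comp, ← map_mul, hRR, map_one, one_apply_eq_self]

theorem Matrix.norm_mul_inv_mul_transpose_le {n : Type*} [Fintype n] [DecidableEq n]
    (B : Matrix n m ℝ) {R : Matrix m m ℝ} {γ : ℝ} (hγ : 0 < γ) (h : (R - γ • 1).PosSemidef) :
    ‖B * R⁻¹ * Bᵀ‖ ≤ ‖B‖ ^ 2 / γ := by
  have hBt : ‖Bᵀ‖ = ‖B‖ := by
    rw [← conjTranspose_eq_transpose_of_trivial, l2_opNorm_conjTranspose]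
  calc ‖B * R⁻¹ * Bᵀ‖ ≤ ‖B‖ * ‖R⁻¹‖ * ‖Bᵀ‖ :=
        (l2_opNorm_mul _ _).trans (mul_le_mul_of_nonneg_right (l2_opNorm_mul _ _) (norm_nonneg _))
    _ ≤ ‖B‖ * γ⁻¹ * ‖B‖ := by
        rw [hBt]; gcongr; exact norm_inv_le_of_posSemidef_sub_smul hγ h
    _ = ‖B‖ ^ 2 / γ := by ring

theorem Matrix.norm_toEuclideanLin_mul_inv_mul_transpose_le {n : Type*} [Fintype n]
    [DecidableEq n] (B : Matrix n m ℝ) {R : Matrix m m ℝ} {γ : ℝ} (hγ : 0 < γ)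
    (h : (R - γ • 1).PosSemidef) (v : EuclideanSpace ℝ n) :
    ‖toEuclideanLin (B * R⁻¹ * Bᵀ) v‖ ≤ ‖B‖ ^ 2 / γ * ‖v‖ :=
  (toEuclideanCLM (𝕜 := ℝ) (B * R⁻¹ * Bᵀ)).le_opNorm v |>.trans
    (mul_le_mul_of_nonneg_right (norm_mul_inv_mul_transpose_le B hγ h) (norm_nonneg v))

end MatrixBounds

theorem integral_exp_mul_exp {ρ : ℝ} (hρ : ρ ≠ 0) (t T : ℝ) :
    ∫ s in (0 : ℝ)..t, exp (-ρ * (t - s)) * exp (-ρ * (T - s)) =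
      (exp (-ρ * (T - t)) - exp (-ρ * (T + t))) / (2 * ρ) := by
  have hF : ∀ s, HasDerivAt (fun r => exp (-ρ * (t - r) + -ρ * (T - r)) / (2 * ρ))
      (exp (-ρ * (t - s)) * exp (-ρ * (T - s))) s := by
    intro s
    have := (((hasDerivAt_id s).const_sub t).const_mul (-ρ)).add
      (((hasDerivAt_id s).const_sub T).const_mul (-ρ)) |>.exp.div_const (2 * ρ)
    refine this.congr_deriv ?_
    simp only [Pi.add_apply, id, exp_add]
    field_simp
    ring
  rw [intervalIntegral.integral_eq_sub_of_hasDerivAt (fun s _ => hF s)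
    (Continuous.intervalIntegrable (by fun_prop) _ _), sub_div]
  congr 2 <;> ring_nf

theorem norm_add_integral_le_of_exp_bounds {E : Type*} [NormedAddCommGroup E] [NormedSpace ℝ E]
    {Φ : ℝ → ℝ → E →L[ℝ] E} {f : ℝ → E} {x₀ : E} {c C ρ T t : ℝ} (hρ : 0 < ρ) (ht : 0 ≤ t)
    (hΦ : ∀ s ∈ Icc 0 t, ‖Φ t s‖ ≤ c * exp (-ρ * (t - s)))
    (hf : ∀ s ∈ Icc 0 t, ‖f s‖ ≤ C * exp (-ρ * (T - s))) :
    ‖Φ t 0 x₀ + ∫ s in (0 : ℝ)..t, Φ t s (f s)‖ ≤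
      c * (‖x₀‖ * exp (-ρ * t)) + c * C / (2 * ρ) * exp (-ρ * (T - t)) := by
  have hc : 0 ≤ c := by
    simpa using (norm_nonneg _).trans (hΦ t ⟨ht, le_rfl⟩)
  have hC : 0 ≤ C :=
    (mul_nonneg_iff_of_pos_right (exp_pos _)).1 ((norm_nonneg _).trans (hf 0 ⟨le_rfl, ht⟩))
  have hinitial : ‖Φ t 0 x₀‖ ≤ c * (‖x₀‖ * exp (-ρ * t)) := by
    calc ‖Φ t 0 x₀‖ ≤ ‖Φ t 0‖ * ‖x₀‖ := (Φ t 0).le_opNorm x₀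
      _ ≤ c * exp (-ρ * (t - 0)) * ‖x₀‖ := by gcongr; exact hΦ 0 ⟨le_rfl, ht⟩
      _ = c * (‖x₀‖ * exp (-ρ * t)) := by rw [sub_zero]; ring
  have hforced : ‖∫ s in (0 : ℝ)..t, Φ t s (f s)‖ ≤ c * C / (2 * ρ) * exp (-ρ * (T - t)) := by
    calc ‖∫ s in (0 : ℝ)..t, Φ t s (f s)‖
        ≤ ∫ s in (0 : ℝ)..t, c * C * (exp (-ρ * (t - s)) * exp (-ρ * (T - s))) := by
          refine intervalIntegral.norm_integral_le_of_norm_le ht (ae_of_all _ fun s hs => ?_)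
            (Continuous.intervalIntegrable (by fun_prop) _ _)
          have hs' : s ∈ Icc 0 t := Ioc_subset_Icc_self hs
          calc ‖Φ t s (f s)‖ ≤ ‖Φ t s‖ * ‖f s‖ := (Φ t s).le_opNorm _
            _ ≤ c * exp (-ρ * (t - s)) * (C * exp (-ρ * (T - s))) := by
              gcongr
              exacts [hΦ s hs', hf s hs']
            _ = _ := by ring
      _ = c * C * ((exp (-ρ * (T - t)) - exp (-ρ * (T + t))) / (2 * ρ)) := by
          rw [intervalIntegral.integral_const_mul, integral_exp_mul_exp hρ.ne']
      _ ≤ c * C / (2 * ρ) * exp (-ρ * (T - t)) := by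
          rw [mul_div_assoc', div_mul_eq_mul_div]
          gcongr
          exact sub_le_self _ (exp_pos _).le
  exact (norm_add_le _ _).trans (add_le_add hinitial hforced)

theorem stmt_16_general {n m : ℕ} (T cZ ρ LT lamG lamB γR : ℝ)
    (hρ : 0 < ρ) (hLT : 0 ≤ LT)
    (hγR : 0 < γR)
    (Z : ℝ → Matrix (Fin n) (Fin n) ℝ) (hZc : ContinuousOn Z (Icc 0 T))
    (Φ : ℝ → ℝ → Matrix (Fin n) (Fin n) ℝ)
    (hΦderiv : ∀ s t : ℝ, HasDerivAt (fun r => Φ r s) (Z t * Φ t s) t)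
    (hΦinit : ∀ s : ℝ, Φ s s = 1)
    (hΦbd : ∀ s t : ℝ, 0 ≤ s → s ≤ t → t ≤ T →
      ‖Φ t s‖ ≤ cZ * Real.exp (-ρ * (t - s)))
    (B : ℝ → Matrix (Fin n) (Fin m) ℝ)
    (hBb : ∀ t ∈ Icc (0 : ℝ) T, ‖B t‖ ≤ lamB)
    (R : ℝ → Matrix (Fin m) (Fin m) ℝ)
    (hRlb : ∀ t ∈ Icc (0 : ℝ) T, (R t - γR • 1).PosSemidef)
    (δv : ℝ → EuclideanSpace ℝ (Fin n))
    (hδv : ∀ s ∈ Icc (0 : ℝ) T, ‖δv s‖ ≤ LT * lamG * cZ * Real.exp (-ρ * (T - s)))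
    (l₀ : EuclideanSpace ℝ (Fin n))
    (δx : ℝ → EuclideanSpace ℝ (Fin n))
    (hδxderiv : ∀ t ∈ Icc (0 : ℝ) T, HasDerivAt δx
      (Matrix.toEuclideanLin (Z t) (δx t)
        - Matrix.toEuclideanLin (B t * (R t)⁻¹ * (B t)ᵀ) (δv t)) t)
    (hδx0 : δx 0 = l₀) :
    ∀ t ∈ Icc (0 : ℝ) T,
      ‖δx t‖ ≤ max cZ (cZ ^ 2 * lamB ^ 2 * lamG / (2 * ρ * γR)) *
        (‖l₀‖ * Real.exp (-ρ * t) + LT * Real.exp (-ρ * (T - t))) := by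
  intro t ht
  set φ := toEuclideanContinuousAlgHom (Fin n)
  have hevol : IsEvolutionOperator_s16 (fun s => φ (Z s)) (fun t s => φ (Φ t s)) 0 T :=
    IsEvolutionOperator_s16.map ⟨fun s _ t _ => hΦderiv s t, fun s _ => hΦinit s⟩ φ
  have hZφ : ContinuousOn (fun s => φ (Z s)) (Icc 0 T) := φ.continuous.comp_continuousOn hZc
  -- Writing the forcing term through `deriv δx` makes it measurable, although nothing is
  -- assumed about the measurability of `B`, `R` or `δv`.
  set g : ℝ → EuclideanSpace ℝ (Fin n) := fun s => deriv δx s - φ (Z s) (δx s)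
  have hδx : ∀ s ∈ Icc 0 T, HasDerivAt δx (φ (Z s) (δx s) + g s) s := fun s hs => by
    rw [add_sub_cancel]; exact (hδxderiv s hs).differentiableAt.hasDerivAt
  have hg : ∀ s ∈ Icc 0 T, ‖g s‖ ≤ lamB ^ 2 / γR * (LT * lamG * cZ) * exp (-ρ * (T - s)) :=
    fun s hs => by
    have hgs : g s = -toEuclideanLin (B s * (R s)⁻¹ * (B s)ᵀ) (δv s) := by
      simp only [g, (hδxderiv s hs).deriv]; exact sub_sub_cancel_left _ _
    calc ‖g s‖ ≤ ‖B s‖ ^ 2 / γR * ‖δv s‖ := by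
          rw [hgs, norm_neg]; exact norm_toEuclideanLin_mul_inv_mul_transpose_le _ hγR (hRlb s hs) _
      _ ≤ lamB ^ 2 / γR * (LT * lamG * cZ * exp (-ρ * (T - s))) := by
          gcongr; exacts [hBb s hs, hδv s hs]
      _ = _ := by ring
  have hg_int : IntegrableOn g (Icc 0 T) := integrableOn_deriv_sub_apply hZφ
    (fun s hs => (hδxderiv s hs).differentiableAt) (Continuous.integrableOn_Icc (by fun_prop)) hg
  rw [hevol.eq_add_integral hZφ hδx hg_int ht, hδx0]
  refine (norm_add_integral_le_of_exp_bounds (Φ := fun t s => φ (Φ t s)) hρ ht.1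
    (fun s hs => hΦbd s t hs.1 hs.2 ht.2) (fun s hs => hg s ⟨hs.1, hs.2.trans ht.2⟩)).trans ?_
  have hcoeff : cZ * (lamB ^ 2 / γR * (LT * lamG * cZ)) / (2 * ρ) =
      cZ ^ 2 * lamB ^ 2 * lamG / (2 * ρ * γR) * LT := by
    field_simp
  rw [hcoeff, mul_assoc _ LT, mul_add]
  gcongr
  exacts [le_max_left _ _, le_max_right _ _]

/-- boundary-perturbation estimate. With ‖Φ_Z(t,s)‖ ≤ c_Z e^{−ρ(t−s)},
‖δv(s)‖ ≤ L_T λ_G c_Z e^{−ρ(T−s)}, ‖B‖ ≤ λ_B, R ⪰ γ_R I, and δx solving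
δẋ = Z δx − BR⁻¹Bᵀ δv with δx(0) = l₀, one has
‖δx(t)‖ ≤ max{c_Z, c_Z²λ_B²λ_G/(2ργ_R)}·(‖l₀‖e^{−ρt} + L_T e^{−ρ(T−t)}). -/
theorem stmt_16 {n m : ℕ} (T cZ ρ LT lamG lamB γR : ℝ)
    (hT : 0 ≤ T) (hcZ : 1 ≤ cZ) (hρ : 0 < ρ) (hLT : 0 ≤ LT)
    (hlamG : 0 ≤ lamG) (hlamB : 0 ≤ lamB) (hγR : 0 < γR)
    (Z : ℝ → Matrix (Fin n) (Fin n) ℝ) (hZc : ContinuousOn Z (Icc 0 T))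
    (Φ : ℝ → ℝ → Matrix (Fin n) (Fin n) ℝ)
    (hΦderiv : ∀ s t : ℝ, HasDerivAt (fun r => Φ r s) (Z t * Φ t s) t)
    (hΦinit : ∀ s : ℝ, Φ s s = 1)
    (hΦbd : ∀ s t : ℝ, 0 ≤ s → s ≤ t → t ≤ T →
      ‖Φ t s‖ ≤ cZ * Real.exp (-ρ * (t - s)))
    (B : ℝ → Matrix (Fin n) (Fin m) ℝ)
    (hBb : ∀ t ∈ Icc (0 : ℝ) T, ‖B t‖ ≤ lamB)
    (R : ℝ → Matrix (Fin m) (Fin m) ℝ)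
    (hRlb : ∀ t ∈ Icc (0 : ℝ) T, (R t - γR • 1).PosSemidef)
    (δv : ℝ → EuclideanSpace ℝ (Fin n))
    (hδv : ∀ s ∈ Icc (0 : ℝ) T, ‖δv s‖ ≤ LT * lamG * cZ * Real.exp (-ρ * (T - s)))
    (l₀ : EuclideanSpace ℝ (Fin n))
    (δx : ℝ → EuclideanSpace ℝ (Fin n))
    (hδxderiv : ∀ t ∈ Icc (0 : ℝ) T, HasDerivAt δx
      (Matrix.toEuclideanLin (Z t) (δx t)
        - Matrix.toEuclideanLin (B t * (R t)⁻¹ * (B t)ᵀ) (δv t)) t)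
    (hδx0 : δx 0 = l₀) :
    ∀ t ∈ Icc (0 : ℝ) T,
      ‖δx t‖ ≤ max cZ (cZ ^ 2 * lamB ^ 2 * lamG / (2 * ρ * γR)) *
        (‖l₀‖ * Real.exp (-ρ * t) + LT * Real.exp (-ρ * (T - t))) :=
  stmt_16_general T cZ ρ LT lamG lamB γR hρ hLT hγR Z hZc Φ hΦderiv hΦinit hΦbd B hBb R hRlb δv hδv
    l₀ δx hδxderiv hδx0
end
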